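/- arXiv:1202.0424 — 2 statements merged into one kernel-verified Lean document; each statement's English description precedes it below -/
import Mathlib

section
/- Let A be a complex number with A ∉ (−∞,0], and let λ = −ω² + i0 with ω > 0 be a point on the branch cut approached from above, so that √λ = iω. Define r(λ,A) = (1/2)·A^{−1/2}·(√λ − √A)^{−1} + (1/2)·conj(A)^{−1/2}·(√λ + conj(√A))^{−1}, where square roots are principal. Then r(λ,A) is purely imaginary, i.e., Re r(λ,A) = 0. -/
open Complex

/-- Scalar stability-corrected resolvent lemma: for `A ∉ (-∞,0]` and `λ = -ω² + i0`
(so `√λ = iω`), the difference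
`r(λ,A) = (1/2) A^{-1/2} (√λ - √A)⁻¹ + (1/2) conj(A)^{-1/2} (√λ + conj(√A))⁻¹`
is purely imaginary. -/
theorem scalar_stability_correction_re_zero (A : ℂ)
    (hA : ¬ (A.im = 0 ∧ A.re ≤ 0)) (ω : ℝ) (hω : 0 < ω) :
    ((1 / 2 : ℂ) * A ^ (-(1 : ℂ) / 2) *
        (Complex.I * ω - A ^ ((1 : ℂ) / 2))⁻¹ +
      (1 / 2 : ℂ) * (starRingEnd ℂ A) ^ (-(1 : ℂ) / 2) *
        (Complex.I * ω + starRingEnd ℂ (A ^ ((1 : ℂ) / 2)))⁻¹).re = 0 := by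
  have harg : A.arg ≠ Real.pi := by
    simp only [ne_eq, Complex.arg_eq_pi_iff, not_and]
    intro h1 h2
    exact hA ⟨h2, h1.le⟩
  have hconj : (starRingEnd ℂ A) ^ (-(1 : ℂ) / 2)
      = starRingEnd ℂ (A ^ (-(1 : ℂ) / 2)) := by
    rw [Complex.conj_cpow _ _ harg]
    congr 1
    rw [map_div₀, map_neg, map_one, map_ofNat]
  have hkey : (1 / 2 : ℂ) * starRingEnd ℂ (A ^ (-(1 : ℂ) / 2)) *
        (Complex.I * ω + starRingEnd ℂ (A ^ ((1 : ℂ) / 2)))⁻¹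
      = - starRingEnd ℂ ((1 / 2 : ℂ) * A ^ (-(1 : ℂ) / 2) *
        (Complex.I * ω - A ^ ((1 : ℂ) / 2))⁻¹) := by
    have h1 : starRingEnd ℂ (Complex.I * ω - A ^ ((1 : ℂ) / 2))
        = -(Complex.I * ω + starRingEnd ℂ (A ^ ((1 : ℂ) / 2))) := by
      simp [map_sub, Complex.conj_I]
      ring
    rw [map_mul, map_mul, map_inv₀, h1, inv_neg]
    simp only [map_div₀, map_one, map_ofNat]
    ring
  rw [hconj, hkey]
  set w := (1 / 2 : ℂ) * A ^ (-(1 : ℂ) / 2) *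
        (Complex.I * ω - A ^ ((1 : ℂ) / 2))⁻¹
  simp [Complex.add_re, Complex.neg_re, Complex.conj_re]
end

section
/- Let A be a complex number with A ∉ (−∞,0], λ = −ω² + i0 with ω > 0, f(λ,A) = (1/2)A^{−1/2}(√λ + √A)^{−1} + (1/2)conj(A)^{−1/2}(√λ + conj(√A))^{−1}, and R(λ,A) = (A − λ)^{−1} where λ is interpreted as the complex number −ω². Then Re f(λ,A) = Re R(λ,A). -/
open Complex

/-- Scalar version of Lemma 4.1: for `A ∉ (-∞,0]` and `λ = -ω² + i0` with `ω > 0`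
(so `√λ = iω`), the real part of the stability-corrected transfer function
`f(λ,A) = (1/2) A^{-1/2} (√λ + √A)⁻¹ + (1/2) conj(A)^{-1/2} (√λ + conj(√A))⁻¹`
equals the real part of the resolvent `R(λ,A) = (A - λ)⁻¹` with `λ = -ω²`. -/
theorem scalar_stability_corrected_transfer_re_eq_resolvent_re (A : ℂ)
    (hA : ¬ (A.im = 0 ∧ A.re ≤ 0)) (ω : ℝ) (hω : 0 < ω) :
    ((1 / 2 : ℂ) * A ^ (-(1 : ℂ) / 2) *
        (Complex.I * ω + A ^ ((1 : ℂ) / 2))⁻¹ +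
      (1 / 2 : ℂ) * (starRingEnd ℂ A) ^ (-(1 : ℂ) / 2) *
        (Complex.I * ω + starRingEnd ℂ (A ^ ((1 : ℂ) / 2)))⁻¹).re =
    ((A - (-(ω : ℂ) ^ 2))⁻¹).re := by
  set s := A ^ ((1 : ℂ) / 2) with hs
  have hA0 : A ≠ 0 := by
    intro h; exact hA (by simp [h])
  have hs2 : s * s = A := by
    rw [hs, ← Complex.cpow_add _ _ hA0]
    norm_num
  have hs0 : s ≠ 0 := by
    intro h
    rw [h, mul_zero] at hs2
    exact hA0 hs2.symm
  have hneg : A ^ (-(1 : ℂ) / 2) = s⁻¹ := by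
    rw [show (-(1 : ℂ) / 2) = -((1 : ℂ)/2) by ring, Complex.cpow_neg, hs]
  have harg : A.arg ≠ Real.pi := by
    intro h
    rw [Complex.arg_eq_pi_iff] at h
    exact hA ⟨h.2, le_of_lt h.1⟩
  have hconj : (starRingEnd ℂ A) ^ (-(1 : ℂ) / 2)
      = starRingEnd ℂ (A ^ (-(1 : ℂ) / 2)) := by
    rw [Complex.conj_cpow _ _ harg]
    congr 2
    norm_num [Complex.conj_ofNat]
  have hω0 : (ω : ℂ) ≠ 0 := by exact_mod_cast hω.ne'
  have h1 : Complex.I * ω + s ≠ 0 := by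
    intro h
    have hsv : s = -(Complex.I * ω) := by linear_combination h
    apply hA
    have : A = -(ω : ℂ)^2 := by
      rw [← hs2, hsv]
      ring_nf
      rw [Complex.I_sq]
      ring
    constructor <;> simp [this, ← Complex.ofReal_pow] <;> positivity
  have h2 : s - Complex.I * ω ≠ 0 := by
    intro h
    have hsv : s = Complex.I * ω := by linear_combination h
    apply hA
    have : A = -(ω : ℂ)^2 := by
      rw [← hs2, hsv]
      ring_nf
      rw [Complex.I_sq]
      ring
    constructor <;> simp [this, ← Complex.ofReal_pow] <;> positivity
  have hAw : A + (ω : ℂ)^2 ≠ 0 := by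
    intro h
    apply hA
    have : A = -(ω : ℂ)^2 := by linear_combination h
    constructor <;> simp [this, ← Complex.ofReal_pow] <;> positivity
  have ht2 : ((1 / 2 : ℂ) * (starRingEnd ℂ A) ^ (-(1 : ℂ) / 2) *
        (Complex.I * ω + starRingEnd ℂ s)⁻¹).re
      = ((1 / 2 : ℂ) * s⁻¹ * (s - Complex.I * ω)⁻¹).re := by
    rw [← Complex.conj_re ((1 / 2 : ℂ) * (starRingEnd ℂ A) ^ (-(1 : ℂ) / 2) *
        (Complex.I * ω + starRingEnd ℂ s)⁻¹)]
    congr 1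
    rw [hconj, hneg]
    simp only [map_mul, map_inv₀, map_add, Complex.conj_conj, Complex.conj_I,
      Complex.conj_ofReal, map_div₀, map_one, map_ofNat]
    ring
  rw [Complex.add_re, ht2, ← Complex.add_re, hneg]
  congr 1
  have : A - (-(ω : ℂ)^2) = A + (ω : ℂ)^2 := by ring
  rw [this]
  have expand : (Complex.I * ω + s) * (s - Complex.I * ω) = A + (ω : ℂ)^2 := by
    linear_combination hs2 - (ω : ℂ)^2 * Complex.I_sq
  rw [← expand]
  field_simp
  ring
end
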